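/- arXiv:0805.4502 — 2 statements merged into one kernel-verified Lean document; each statement's English description precedes it below -/
import Mathlib

section
/- The ideals 𝒢̄ = α𝒪 and (1+i)𝒪 are coprime in 𝒪, i.e. α𝒪 + (1+i)𝒪 = 𝒪, and consequently 𝒢̄/(1+i)𝒢̄ ≅ 𝒪/(1+i)𝒪 as rings. -/
open Matrix

/-- The golden number θ = (1+√5)/2, as a complex number. -/
noncomputable def gold : ℂ := (1 + Real.sqrt 5) / 2

/-- Squared Frobenius norm of a 2×2 complex matrix. -/
noncomputable def fro2 (M : Matrix (Fin 2) (Fin 2) ℂ) : ℝ :=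
  ∑ i, ∑ j, ‖M i j‖ ^ 2

/-- The element `a + bθ + i(c + dθ)` of `ℤ[i,θ]`. -/
noncomputable def zit (a b c d : ℤ) : ℂ :=
  (a : ℂ) + b * gold + Complex.I * ((c : ℂ) + d * gold)

/-- Its conjugate under `θ ↦ 1 − θ`. -/
noncomputable def zitBar (a b c d : ℤ) : ℂ :=
  (a : ℂ) + b * (1 - gold) + Complex.I * ((c : ℂ) + d * (1 - gold))

/-- The matrix `[[w₁, w₂], [i·w̄₂, w̄₁]]` of the order `𝒪`, with
`w₁ = a + bθ + i(c+dθ)` and `w₂ = e + fθ + i(g+hθ)`. -/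
noncomputable def Omat (a b c d e f g h : ℤ) : Matrix (Fin 2) (Fin 2) ℂ :=
  !![zit a b c d, zit e f g h;
     Complex.I * zitBar e f g h, zitBar a b c d]

/-- Membership in the order `𝒪`. -/
def inO (W : Matrix (Fin 2) (Fin 2) ℂ) : Prop :=
  ∃ a b c d e f g h : ℤ, W = Omat a b c d e f g h

/-- `α = 1 + i·θ̄ = 1 + i(1−θ)`. -/
noncomputable def alphaG : ℂ := 1 + Complex.I * (1 - gold)

/-- `ᾱ = 1 + i·θ`. -/
noncomputable def alphaBarG : ℂ := 1 + Complex.I * gold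

/-- `A = diag(α, ᾱ)`. -/
noncomputable def Amat : Matrix (Fin 2) (Fin 2) ℂ := !![alphaG, 0; 0, alphaBarG]

/-- Membership in the Golden Code `𝒢 = (1/√5)·A·𝒪`. -/
def inG (X : Matrix (Fin 2) (Fin 2) ℂ) : Prop :=
  ∃ W, inO W ∧ X = ((Real.sqrt 5 : ℂ))⁻¹ • (Amat * W)

/-- Membership in the integral ideal `𝒢̄ = α𝒪 = √5·𝒢`. -/
def inGbar (X : Matrix (Fin 2) (Fin 2) ℂ) : Prop := ∃ W, inO W ∧ X = Amat * W

/-!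
Since `A = diag(α, ᾱ)` and `Ā = diag(ᾱ, α)` lie in `𝒪` and `AĀ = ĀA = N(α) = 2 + i`, the identity
`1 = (2 + i) − (1 + i)` gives `Z = A(ĀZ) − (1 + i)Z` for every `Z ∈ 𝒪`. If `AW₀ = (1 + i)W` with
`W₀, W ∈ 𝒪`, then `(2 + i)W₀ = (1 + i)ĀW`, hence `W₀ = (2 + i)W₀ − (1 + i)W₀ = (1 + i)(ĀW − W₀)`.
-/

open Complex

/-- `zit` and `zitBar` are `goldenGaussian θ` and `goldenGaussian (1 − θ)`. -/
noncomputable def goldenGaussian (φ : ℂ) (a b c d : ℤ) : ℂ := a + b * φ + I * (c + d * φ)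

theorem goldenGaussian_mul {φ : ℂ} (hφ : φ ^ 2 = φ + 1) (p q r s a b c d : ℤ) :
    goldenGaussian φ p q r s * goldenGaussian φ a b c d =
      goldenGaussian φ (p * a + q * b - r * c - s * d)
        (p * b + q * a + q * b - r * d - s * c - s * d)
        (p * c + q * d + r * a + s * b) (p * d + q * c + q * d + r * b + s * a + s * b) := by
  simp only [goldenGaussian]
  push_cast
  linear_combination (q * b - s * d + I * (q * d + s * b)) * hφ + (r + s * φ) * (c + d * φ) * I_sq

theorem gold_sq : gold ^ 2 = gold + 1 := by
  have h5 : (Real.sqrt 5 : ℂ) ^ 2 = 5 := by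
    rw [← ofReal_pow, Real.sq_sqrt (by norm_num : (0 : ℝ) ≤ 5)]
    norm_num
  unfold gold
  linear_combination (1 / 4 : ℂ) * h5

theorem one_sub_gold_sq : (1 - gold) ^ 2 = (1 - gold) + 1 := by
  linear_combination gold_sq

theorem exists_zit_mul (p q r s a b c d : ℤ) : ∃ a' b' c' d' : ℤ,
    zit p q r s * zit a b c d = zit a' b' c' d' ∧
      zitBar p q r s * zitBar a b c d = zitBar a' b' c' d' :=
  ⟨_, _, _, _, goldenGaussian_mul gold_sq p q r s a b c d,
    goldenGaussian_mul one_sub_gold_sq p q r s a b c d⟩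

/-- `𝒪` is a left module over `ℤ[i,θ]`, embedded diagonally as `w ↦ diag(w, w̄)`. -/
theorem inO_diag_mul (p q r s : ℤ) {W : Matrix (Fin 2) (Fin 2) ℂ} (hW : inO W) :
    inO (Omat p q r s 0 0 0 0 * W) := by
  obtain ⟨a, b, c, d, e, f, g, h, rfl⟩ := hW
  obtain ⟨a', b', c', d', h₁, h₁'⟩ := exists_zit_mul p q r s a b c d
  obtain ⟨e', f', g', h', h₂, h₂'⟩ := exists_zit_mul p q r s e f g h
  have hzit : zit 0 0 0 0 = 0 := by simp [zit]
  have hzitBar : zitBar 0 0 0 0 = 0 := by simp [zitBar]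
  refine ⟨a', b', c', d', e', f', g', h', ?_⟩
  simp only [Omat, mul_fin_two, hzit, hzitBar, mul_zero, zero_mul, add_zero, zero_add, ← h₁, ← h₁',
    ← h₂, ← h₂', mul_left_comm _ I]

theorem inO_add {W W' : Matrix (Fin 2) (Fin 2) ℂ} (hW : inO W) (hW' : inO W') :
    inO (W + W') := by
  obtain ⟨a, b, c, d, e, f, g, h, rfl⟩ := hW
  obtain ⟨a', b', c', d', e', f', g', h', rfl⟩ := hW'
  refine ⟨a + a', b + b', c + c', d + d', e + e', f + f', g + g', h + h', ?_⟩
  ext i j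
  fin_cases i <;> fin_cases j <;> simp [Omat, zit, zitBar] <;> ring

theorem inO_neg {W : Matrix (Fin 2) (Fin 2) ℂ} (hW : inO W) : inO (-W) := by
  obtain ⟨a, b, c, d, e, f, g, h, rfl⟩ := hW
  refine ⟨-a, -b, -c, -d, -e, -f, -g, -h, ?_⟩
  ext i j
  fin_cases i <;> fin_cases j <;> simp [Omat, zit, zitBar] <;> ring

theorem inO_sub {W W' : Matrix (Fin 2) (Fin 2) ℂ} (hW : inO W) (hW' : inO W') :
    inO (W - W') := by
  rw [sub_eq_add_neg]
  exact inO_add hW (inO_neg hW')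

theorem smul_eq_Omat_mul (p q : ℤ) (W : Matrix (Fin 2) (Fin 2) ℂ) :
    ((p : ℂ) + q * I) • W = Omat p 0 q 0 0 0 0 0 * W := by
  rw [← smul_one_mul]
  congr 1
  ext i j
  fin_cases i <;> fin_cases j <;> simp [Omat, zit, zitBar, mul_comm]

theorem inO_gaussian_smul (p q : ℤ) {W : Matrix (Fin 2) (Fin 2) ℂ} (hW : inO W) :
    inO (((p : ℂ) + q * I) • W) := by
  rw [smul_eq_Omat_mul]
  exact inO_diag_mul p 0 q 0 hW

theorem inO_one_add_I_smul {W : Matrix (Fin 2) (Fin 2) ℂ} (hW : inO W) :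
    inO ((1 + I) • W) := by
  simpa using inO_gaussian_smul 1 1 hW

theorem Amat_eq_Omat : Amat = Omat 1 0 1 (-1) 0 0 0 0 := by
  ext i j
  fin_cases i <;> fin_cases j <;> simp [Amat, Omat, alphaG, alphaBarG, zit, zitBar]
  ring

theorem inO_Amat_mul {W : Matrix (Fin 2) (Fin 2) ℂ} (hW : inO W) : inO (Amat * W) := by
  rw [Amat_eq_Omat]
  exact inO_diag_mul 1 0 1 (-1) hW

noncomputable def AbarMat : Matrix (Fin 2) (Fin 2) ℂ := !![alphaBarG, 0; 0, alphaG]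

theorem AbarMat_eq_Omat : AbarMat = Omat 1 0 0 1 0 0 0 0 := by
  ext i j
  fin_cases i <;> fin_cases j <;> simp [AbarMat, Omat, alphaG, alphaBarG, zit, zitBar]

theorem inO_AbarMat_mul {W : Matrix (Fin 2) (Fin 2) ℂ} (hW : inO W) : inO (AbarMat * W) := by
  rw [AbarMat_eq_Omat]
  exact inO_diag_mul 1 0 0 1 hW

theorem alphaG_mul_alphaBarG : alphaG * alphaBarG = 2 + I := by
  simp only [alphaG, alphaBarG]
  linear_combination (gold - gold ^ 2) * I_sq + gold_sq

theorem Amat_mul_AbarMat : Amat * AbarMat = (2 + I) • 1 := by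
  ext i j
  fin_cases i <;> fin_cases j <;>
    simp [Amat, AbarMat, alphaG_mul_alphaBarG, mul_comm alphaBarG alphaG]

theorem AbarMat_mul_Amat : AbarMat * Amat = (2 + I) • 1 := by
  ext i j
  fin_cases i <;> fin_cases j <;>
    simp [Amat, AbarMat, alphaG_mul_alphaBarG, mul_comm alphaBarG alphaG]

theorem sub_Amat_mul_AbarMat_mul (Z : Matrix (Fin 2) (Fin 2) ℂ) :
    Z - Amat * (AbarMat * Z) = (1 + I) • -Z := by
  rw [← Matrix.mul_assoc, Amat_mul_AbarMat, smul_mul_assoc, one_mul]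
  module

theorem exists_eq_one_add_I_smul_of_Amat_mul {W₀ W : Matrix (Fin 2) (Fin 2) ℂ} (hW₀ : inO W₀)
    (hW : inO W) (h : Amat * W₀ = (1 + I) • W) :
    ∃ V, inO V ∧ W₀ = (1 + I) • V := by
  have hnorm : (2 + I) • W₀ = (1 + I) • (AbarMat * W) := by
    rw [← Matrix.mul_smul, ← h, ← Matrix.mul_assoc, AbarMat_mul_Amat, smul_mul_assoc, one_mul]
  refine ⟨AbarMat * W - W₀, inO_sub (inO_AbarMat_mul hW) hW₀, ?_⟩
  rw [smul_sub, ← hnorm]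
  module

/-- The ideals `𝒢̄ = α𝒪` and `(1+i)𝒪` are coprime: `α𝒪 + (1+i)𝒪 = 𝒪`.
Consequently `𝒢̄/(1+i)𝒢̄ ≅ 𝒪/(1+i)𝒪`: the natural map `𝒢̄ → 𝒪/(1+i)𝒪` is
surjective and its kernel is `(1+i)𝒢̄`. -/
theorem Gbar_coprime_one_add_i :
    (∀ Z, inO Z ↔ ∃ X W, inGbar X ∧ inO W ∧ Z = X + (1 + Complex.I) • W) ∧
    (∀ Z, inO Z → ∃ X, inGbar X ∧ ∃ W, inO W ∧ Z - X = (1 + Complex.I) • W) ∧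
    (∀ X, inGbar X →
      ((∃ W, inO W ∧ X = (1 + Complex.I) • W) ↔
       (∃ Y, inGbar Y ∧ X = (1 + Complex.I) • Y))) := by
  have inGbar_Amat_mul {Z} (hZ : inO Z) : inGbar (Amat * (AbarMat * Z)) :=
    ⟨_, inO_AbarMat_mul hZ, rfl⟩
  refine ⟨fun Z => ⟨fun hZ => ?_, ?_⟩, fun Z hZ => ?_, ?_⟩
  · exact ⟨_, _, inGbar_Amat_mul hZ, inO_neg hZ,
      sub_eq_iff_eq_add'.1 (sub_Amat_mul_AbarMat_mul Z)⟩
  · rintro ⟨_, W, ⟨W₀, hW₀, rfl⟩, hW, rfl⟩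
    exact inO_add (inO_Amat_mul hW₀) (inO_one_add_I_smul hW)
  · exact ⟨_, inGbar_Amat_mul hZ, _, inO_neg hZ, sub_Amat_mul_AbarMat_mul Z⟩
  · rintro _ ⟨W₀, hW₀, rfl⟩
    refine ⟨fun ⟨W, hW, h⟩ => ?_, fun ⟨_, ⟨W', hW', rfl⟩, h⟩ => ⟨_, inO_Amat_mul hW', h⟩⟩
    obtain ⟨V, hV, rfl⟩ := exists_eq_one_add_I_smul_of_Amat_mul hW₀ hW h
    exact ⟨Amat * V, ⟨V, hV, rfl⟩, Matrix.mul_smul _ _ _⟩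
end

section
/- Let X = (X₁,…,X_L) be a coset codeword with components Xᵢ = cᵢ + Zᵢ where Zᵢ ∈ I (an ideal of 𝒢) and (c₁,…,c_L) are coset leaders selected by a binary code of minimum Hamming distance d_min. Then det(Σᵢ XᵢXᵢᴴ) ≥ min( min_{0 ≠ Z ∈ I} |det Z|², d_min²·(1/5) ) for X ≠ 0. -/
/-!
For 2×2 positive semidefinite matrices `√det` is superadditive (Minkowski's determinant
inequality), so `det (∑ Xₖ Xₖᴴ) ≥ (∑ ‖det Xₖ‖)²`. If all coset leaders lie in `I`, some `Xₖ` is a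
nonzero element of `I`; otherwise at least `dmin` of the `Xₖ` are nonzero Golden Code words.
For these `det X = (2 + i) / 5 · (N w₁ - i N w₂)`, where `N` is the relative norm from
`ℤ[i, θ]` to `ℤ[i]`, so `‖det X‖² ≥ 1 / 5` as soon as `N w₁ ≠ i N w₂`. That holds for
`(w₁, w₂) ≠ 0` by descent: modulo `2 + i` the norm form `N` is a square and `i ≡ 3` is not, which
forces `2 + i` to divide every coordinate.
-/

open Matrix

open ComplexOrder Finset

theorem add_sq_le_of_sq_le_mul_sub_norm_sq {p q p' q' s t : ℝ} {z z' : ℂ}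
    (hp : 0 ≤ p) (hq : 0 ≤ q) (hp' : 0 ≤ p') (hq' : 0 ≤ q')
    (hpq : s ^ 2 ≤ p * q - ‖z‖ ^ 2) (hpq' : t ^ 2 ≤ p' * q' - ‖z'‖ ^ 2) :
    (s + t) ^ 2 ≤ (p + p') * (q + q') - ‖z + z'‖ ^ 2 := by
  have hzz' : ‖z + z'‖ ^ 2 ≤ (‖z‖ + ‖z'‖) ^ 2 := by gcongr; exact norm_add_le z z'
  -- Cauchy–Schwarz followed by AM–GM bounds the cross terms
  have hcross : ‖z‖ * ‖z'‖ + s * t ≤ (p * q' + p' * q) / 2 := by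
    apply abs_le_of_sq_le_sq' _ (by positivity) |>.2
    nlinarith [sq_nonneg (‖z‖ * t - s * ‖z'‖), sq_nonneg (p * q' - p' * q),
      norm_nonneg z, norm_nonneg z', mul_nonneg hp hq, mul_nonneg hp' hq']
  nlinarith

theorem Matrix.IsHermitian.re_det_fin_two {A : Matrix (Fin 2) (Fin 2) ℂ} (hA : A.IsHermitian) :
    A.det.re = (A 0 0).re * (A 1 1).re - ‖A 0 1‖ ^ 2 := by
  have h10 : A 1 0 = star (A 0 1) := (hA.apply 1 0).symm
  have h00 : (A 0 0).im = 0 := by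
    have := congrArg Complex.im (hA.apply 0 0); simp at this; linarith
  rw [det_fin_two, h10, Complex.star_def, Complex.mul_conj, Complex.sub_re, Complex.mul_re,
    Complex.ofReal_re, Complex.normSq_eq_norm_sq, h00, zero_mul, sub_zero]

theorem Matrix.PosSemidef.sq_add_le_re_det_add {A B : Matrix (Fin 2) (Fin 2) ℂ}
    (hA : A.PosSemidef) (hB : B.PosSemidef) {s t : ℝ}
    (hs : s ^ 2 ≤ A.det.re) (ht : t ^ 2 ≤ B.det.re) : (s + t) ^ 2 ≤ (A + B).det.re := by
  rw [hA.isHermitian.re_det_fin_two] at hs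
  rw [hB.isHermitian.re_det_fin_two] at ht
  rw [(hA.add hB).isHermitian.re_det_fin_two]
  exact add_sq_le_of_sq_le_mul_sub_norm_sq (Complex.nonneg_iff.mp hA.diag_nonneg).1
    (Complex.nonneg_iff.mp hA.diag_nonneg).1 (Complex.nonneg_iff.mp hB.diag_nonneg).1
    (Complex.nonneg_iff.mp hB.diag_nonneg).1 hs ht

theorem sq_sum_norm_det_le_re_det_sum_mul_conjTranspose {ι : Type*}
    (s : Finset ι) (X : ι → Matrix (Fin 2) (Fin 2) ℂ) :
    (∑ k ∈ s, ‖(X k).det‖) ^ 2 ≤ (∑ k ∈ s, X k * (X k)ᴴ).det.re := by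
  classical
  induction s using Finset.induction with
  | empty => simp
  | insert a s ha ih =>
    rw [Finset.sum_insert ha, Finset.sum_insert ha]
    refine (posSemidef_self_mul_conjTranspose _).sq_add_le_re_det_add
      (posSemidef_sum s fun k _ => posSemidef_self_mul_conjTranspose _) ?_ ih
    rw [det_mul, det_conjTranspose, Complex.star_def, Complex.mul_conj, Complex.ofReal_re,
      Complex.normSq_eq_norm_sq]

theorem Finset.card_sq_mul_le_sq_sum {ι : Type*} [Fintype ι] {f : ι → ℝ} (hf : ∀ k, 0 ≤ f k)
    {s : Finset ι} {δ : ℝ} (hδ : 0 ≤ δ) (hs : ∀ k ∈ s, δ ≤ f k ^ 2) :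
    (#s : ℝ) ^ 2 * δ ≤ (∑ k, f k) ^ 2 := by
  have hsum : #s • √δ ≤ ∑ k ∈ s, f k :=
    s.card_nsmul_le_sum _ _ fun k hk => (Real.sqrt_le_left (hf k)).mpr (hs k hk)
  calc (#s : ℝ) ^ 2 * δ = (#s • √δ) ^ 2 := by rw [nsmul_eq_mul, mul_pow, Real.sq_sqrt hδ]
    _ ≤ (∑ k ∈ s, f k) ^ 2 := by gcongr
    _ ≤ (∑ k, f k) ^ 2 :=
      pow_le_pow_left₀ (s.sum_nonneg fun k _ => hf k) (s.sum_le_univ_sum_of_nonneg fun k => hf k) 2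

lemma ZMod.eq_zero_of_sq_eq_three_mul_sq : ∀ s t : ZMod 5, s ^ 2 = 3 * t ^ 2 → s = 0 ∧ t = 0 := by
  decide

namespace GaussianInt

local notation "ϖ" => (⟨2, 1⟩ : GaussianInt)

/-- Reduction modulo the prime `2 + i`, which sends `i` to `3`. -/
def modTwoAddI : GaussianInt →+* ZMod 5 := Zsqrtd.lift ⟨3, by decide⟩

lemma modTwoAddI_apply (z : GaussianInt) : modTwoAddI z = z.re + z.im * 3 := rfl

lemma modTwoAddI_two_add_I : modTwoAddI ϖ = 0 := by decide

lemma two_add_I_dvd_of_modTwoAddI_eq_zero {z : GaussianInt} (h : modTwoAddI z = 0) : ϖ ∣ z := by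
  rw [modTwoAddI_apply] at h
  obtain ⟨k, hk⟩ := (ZMod.intCast_zmod_eq_zero_iff_dvd (z.re + 3 * z.im) 5).mp
    (by rw [← h]; push_cast; ring)
  refine ⟨⟨2 * k - z.im, z.im - k⟩, ?_⟩
  ext <;> simp [Zsqrtd.re_mul, Zsqrtd.im_mul] <;> omega

/-- The relative norm `(x + yθ)(x + y(1 - θ))` from `ℤ[i, θ]` to `ℤ[i]`. -/
def normTheta (x y : GaussianInt) : GaussianInt := x ^ 2 + x * y - y ^ 2

lemma normTheta_two_add_I_mul (x y : GaussianInt) :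
    normTheta (ϖ * x) (ϖ * y) = ϖ ^ 2 * normTheta x y := by
  unfold normTheta; ring

lemma modTwoAddI_normTheta (x y : GaussianInt) :
    modTwoAddI (normTheta x y) = (modTwoAddI x + 3 * modTwoAddI y) ^ 2 := by
  have h5 : (5 : ZMod 5) = 0 := rfl
  simp only [normTheta, map_sub, map_add, map_mul, map_pow]
  linear_combination (-(modTwoAddI x * modTwoAddI y) - 2 * modTwoAddI y ^ 2) * h5

lemma normTheta_eq_two_add_I_mul {x y u : GaussianInt} (hu : x + 3 * y = ϖ * u) :
    normTheta x y = ϖ * (ϖ * u ^ 2 - 5 * u * y + ⟨2, -1⟩ * y ^ 2) := by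
  have h5 : ϖ * ⟨2, -1⟩ = 5 := by decide
  unfold normTheta
  linear_combination (x + ϖ * u - 2 * y) * hu - y ^ 2 * h5

lemma two_add_I_dvd_of_normTheta_eq_I_mul {x₁ y₁ x₂ y₂ : GaussianInt}
    (h : normTheta x₁ y₁ = ⟨0, 1⟩ * normTheta x₂ y₂) : ϖ ∣ x₁ ∧ ϖ ∣ y₁ ∧ ϖ ∣ x₂ ∧ ϖ ∣ y₂ := by
  have hI : modTwoAddI ⟨0, 1⟩ = 3 := rfl
  have h3 : modTwoAddI 3 = 3 := rfl
  have h5 : modTwoAddI 5 = 0 := rfl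
  have hx := congrArg modTwoAddI h
  rw [map_mul, modTwoAddI_normTheta, modTwoAddI_normTheta, hI] at hx
  obtain ⟨hx₁, hx₂⟩ := ZMod.eq_zero_of_sq_eq_three_mul_sq _ _ hx
  have hdvd : ∀ x y : GaussianInt, modTwoAddI x + 3 * modTwoAddI y = 0 → ϖ ∣ x + 3 * y :=
    fun x y hxy => two_add_I_dvd_of_modTwoAddI_eq_zero (by rwa [map_add, map_mul, h3])
  obtain ⟨u₁, hu₁⟩ := hdvd x₁ y₁ hx₁
  obtain ⟨u₂, hu₂⟩ := hdvd x₂ y₂ hx₂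
  rw [normTheta_eq_two_add_I_mul hu₁, normTheta_eq_two_add_I_mul hu₂, mul_left_comm,
    mul_right_inj' (by decide)] at h
  -- the cofactor of `ϖ` in `normTheta (ϖ * u - 3 * y) y` is `-y ^ 2` modulo `ϖ`
  have hy := congrArg modTwoAddI h
  have h4 : modTwoAddI ⟨2, -1⟩ = -1 := rfl
  simp only [map_add, map_sub, map_mul, map_pow, modTwoAddI_two_add_I, hI, h4, h5] at hy
  obtain ⟨hy₁, hy₂⟩ := ZMod.eq_zero_of_sq_eq_three_mul_sq (modTwoAddI y₁) (modTwoAddI y₂)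
    (by linear_combination -hy)
  have hπy₁ := two_add_I_dvd_of_modTwoAddI_eq_zero hy₁
  have hπy₂ := two_add_I_dvd_of_modTwoAddI_eq_zero hy₂
  refine ⟨?_, hπy₁, ?_, hπy₂⟩
  · rw [show x₁ = ϖ * u₁ - 3 * y₁ by linear_combination hu₁]
    exact dvd_sub (dvd_mul_right _ _) (dvd_mul_of_dvd_right hπy₁ _)
  · rw [show x₂ = ϖ * u₂ - 3 * y₂ by linear_combination hu₂]
    exact dvd_sub (dvd_mul_right _ _) (dvd_mul_of_dvd_right hπy₂ _)

theorem eq_zero_of_normTheta_eq_I_mul {x₁ y₁ x₂ y₂ : GaussianInt}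
    (h : normTheta x₁ y₁ = ⟨0, 1⟩ * normTheta x₂ y₂) : x₁ = 0 ∧ y₁ = 0 ∧ x₂ = 0 ∧ y₂ = 0 := by
  by_contra hne
  obtain ⟨⟨a₁, ha₁⟩, ⟨b₁, hb₁⟩, ⟨a₂, ha₂⟩, ⟨b₂, hb₂⟩⟩ := two_add_I_dvd_of_normTheta_eq_I_mul h
  rw [ha₁, hb₁, ha₂, hb₂, normTheta_two_add_I_mul, normTheta_two_add_I_mul, mul_left_comm,
    mul_right_inj' (by decide)] at h
  obtain ⟨rfl, rfl, rfl, rfl⟩ := eq_zero_of_normTheta_eq_I_mul h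
  simp_all
termination_by (x₁.norm + y₁.norm + x₂.norm + y₂.norm).toNat
decreasing_by
  have hϖ (z : GaussianInt) : (ϖ * z).norm = 5 * z.norm := by rw [Zsqrtd.norm_mul]; rfl
  subst ha₁ hb₁ ha₂ hb₂
  simp only [mul_eq_zero, show ϖ ≠ 0 by decide, false_or, ← norm_eq_zero] at hne
  simp only [hϖ]
  have := norm_nonneg a₁; have := norm_nonneg b₁
  have := norm_nonneg a₂; have := norm_nonneg b₂
  omega

end GaussianInt

section GoldenCode

open Complex

lemma gold_mul_one_sub_gold : gold * (1 - gold) = -1 := by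
  have h : ((Real.sqrt 5 : ℝ) : ℂ) ^ 2 = 5 := by norm_cast; simp
  unfold gold
  linear_combination (-1 / 4 : ℂ) * h

lemma det_Omat (a b c d e f g h : ℤ) :
    (Omat a b c d e f g h).det =
      ((GaussianInt.normTheta ⟨a, c⟩ ⟨b, d⟩ - ⟨0, 1⟩ * GaussianInt.normTheta ⟨e, g⟩ ⟨f, h⟩ :
        GaussianInt) : ℂ) := by
  simp only [Omat, zit, zitBar, det_fin_two_of, GaussianInt.normTheta, map_sub, map_add, map_mul,
    map_pow, GaussianInt.toComplex_def']
  linear_combination (((b : ℂ) + d * I) ^ 2 - I * ((f : ℂ) + h * I) ^ 2) * gold_mul_one_sub_gold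

lemma det_Amat : Amat.det = 2 + I := by
  simp only [Amat, alphaG, alphaBarG, det_fin_two_of]
  linear_combination I ^ 2 * gold_mul_one_sub_gold - I_sq

lemma Omat_add (a b c d e f g h a' b' c' d' e' f' g' h' : ℤ) :
    Omat a b c d e f g h + Omat a' b' c' d' e' f' g' h' =
      Omat (a + a') (b + b') (c + c') (d + d') (e + e') (f + f') (g + g') (h + h') := by
  ext i j
  fin_cases i <;> fin_cases j <;> simp [Omat, zit, zitBar] <;> ring

lemma inG_add {X Y : Matrix (Fin 2) (Fin 2) ℂ} (hX : inG X) (hY : inG Y) : inG (X + Y) := by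
  obtain ⟨_, ⟨a, b, c, d, e, f, g, h, rfl⟩, rfl⟩ := hX
  obtain ⟨_, ⟨a', b', c', d', e', f', g', h', rfl⟩, rfl⟩ := hY
  exact ⟨_, ⟨_, _, _, _, _, _, _, _, Omat_add ..⟩, by rw [mul_add, smul_add]⟩

lemma inG.exists_det_eq {X : Matrix (Fin 2) (Fin 2) ℂ} (hX : inG X) (hX0 : X ≠ 0) :
    ∃ w : GaussianInt, w ≠ 0 ∧ X.det = (2 + I) / 5 * w := by
  obtain ⟨_, ⟨a, b, c, d, e, f, g, h, rfl⟩, rfl⟩ := hX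
  refine ⟨GaussianInt.normTheta ⟨a, c⟩ ⟨b, d⟩ - ⟨0, 1⟩ * GaussianInt.normTheta ⟨e, g⟩ ⟨f, h⟩,
    fun hw => hX0 ?_, ?_⟩
  · obtain ⟨h₁, h₂, h₃, h₄⟩ := GaussianInt.eq_zero_of_normTheta_eq_I_mul (sub_eq_zero.mp hw)
    simp only [Zsqrtd.ext_iff, Zsqrtd.re_zero, Zsqrtd.im_zero] at h₁ h₂ h₃ h₄
    have hO : Omat a b c d e f g h = 0 := by
      ext i j; fin_cases i <;> fin_cases j <;> simp [Omat, zit, zitBar, h₁, h₂, h₃, h₄]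
    rw [hO, mul_zero, smul_zero]
  · have h5 : ((Real.sqrt 5 : ℝ) : ℂ) ^ 2 = 5 := by norm_cast; simp
    rw [det_smul, det_mul, det_Amat, det_Omat, Fintype.card_fin, inv_pow, h5]
    ring

theorem one_div_five_le_norm_det_sq_of_inG {X : Matrix (Fin 2) (Fin 2) ℂ} (hX : inG X)
    (hX0 : X ≠ 0) : 1 / 5 ≤ ‖X.det‖ ^ 2 := by
  obtain ⟨w, hw, hdet⟩ := hX.exists_det_eq hX0
  have hw1 : (1 : ℝ) ≤ normSq (w : ℂ) := by
    rw [← GaussianInt.intCast_real_norm]; exact_mod_cast GaussianInt.norm_pos.mpr hw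
  have h25 : normSq (2 + I) = 5 := by norm_num [normSq_apply]
  have h25' : normSq 5 = 25 := by norm_num [normSq_apply]
  rw [hdet, Complex.sq_norm, normSq_mul, normSq_div, h25, h25']
  linarith

end GoldenCode

/-- Coset code bound: if `X = (X₁,…,X_L)` with `Xᵢ = cᵢ + Zᵢ`, `Zᵢ ∈ I` an ideal of
`𝒢`, and the coset leaders `(c₁,…,c_L)` are selected by a binary code of minimum
Hamming distance `d_min` (so either all `cᵢ ∈ I`, or at least `d_min` of them lie
outside `I`), then for `X ≠ 0`,
`det(Σᵢ XᵢXᵢᴴ) ≥ min( min_{0 ≠ Z ∈ I} |det Z|², d_min²·(1/5) )`. -/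
theorem coset_code_bound (L : ℕ) (I : AddSubgroup (Matrix (Fin 2) (Fin 2) ℂ))
    (hIG : ∀ x ∈ I, inG x) (dmin : ℕ)
    (c Z : Fin L → Matrix (Fin 2) (Fin 2) ℂ)
    (hc : ∀ k, inG (c k)) (hZ : ∀ k, Z k ∈ I)
    (hcode : (∀ k, c k ∈ I) ∨ dmin ≤ Set.ncard {k | c k ∉ I})
    (hX0 : (fun k => c k + Z k) ≠ 0) :
    min (sInf {t : ℝ | ∃ W ∈ I, W ≠ 0 ∧ t = ‖W.det‖ ^ 2})
        ((dmin : ℝ) ^ 2 * (1 / 5))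
      ≤ ‖(∑ k, (c k + Z k) * (c k + Z k)ᴴ).det‖ := by
  classical
  set X : Fin L → Matrix (Fin 2) (Fin 2) ℂ := fun k => c k + Z k
  refine le_trans ?_ ((sq_sum_norm_det_le_re_det_sum_mul_conjTranspose _ X).trans
    (Complex.re_le_norm _))
  rcases hcode with hall | hdmin
  · obtain ⟨j, hj⟩ := Function.ne_iff.mp hX0
    calc _ ≤ sInf {t : ℝ | ∃ W ∈ I, W ≠ 0 ∧ t = ‖W.det‖ ^ 2} := min_le_left _ _
      _ ≤ ‖(X j).det‖ ^ 2 :=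
        csInf_le ⟨0, by rintro _ ⟨W, -, -, rfl⟩; positivity⟩
          ⟨X j, I.add_mem (hall j) (hZ j), hj, rfl⟩
      _ ≤ (∑ k, ‖(X k).det‖) ^ 2 := by
        gcongr
        exact single_le_sum (f := fun k => ‖(X k).det‖) (fun k _ => norm_nonneg _) (mem_univ j)
  · have hout : ∀ k ∈ {k | c k ∉ I}.toFinset, 1 / 5 ≤ ‖(X k).det‖ ^ 2 := by
      intro k hk
      refine one_div_five_le_norm_det_sq_of_inG (inG_add (hc k) (hIG _ (hZ k))) fun h0 => ?_
      rw [Set.mem_toFinset] at hk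
      exact hk (eq_neg_of_add_eq_zero_left h0 ▸ I.neg_mem (hZ k))
    calc _ ≤ (dmin : ℝ) ^ 2 * (1 / 5) := min_le_right _ _
      _ ≤ (#{k | c k ∉ I}.toFinset : ℝ) ^ 2 * (1 / 5) := by
        gcongr
        rwa [Set.ncard_eq_toFinset_card'] at hdmin
      _ ≤ _ := Finset.card_sq_mul_le_sq_sum (fun k => norm_nonneg _) (by norm_num) hout
end
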